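/- Let f : ℝ → ℝ be C², let α₀ ∈ ℝ, and consider a family f_α(x) with f_α C¹ jointly in (α, x), satisfying f_{α₀}(x₀) = x₀, ∂_x f_{α₀}(x₀) = 1, ∂²_x f_{α₀}(x₀) > 0, and ∂_α f_α(x₀)|_{α=α₀} > 0. Then there exist ᾱ > α₀ and an open neighborhood V of x₀ such that for every α ∈ (α₀, ᾱ), the map f_α has no fixed point in V. -/

import Mathlib

/-!
Near `x₀` the graph of `f α₀` lies above the diagonal: `x ↦ f α₀ x - x` vanishes at `x₀` together
with its derivative and has positive second derivative there, so `x₀` is a local minimum.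
Since `∂_α f > 0` on a neighbourhood of `(α₀, x₀)`, increasing `α` a little above `α₀` lifts the
graph strictly, uniformly for `x` near `x₀`, so `f α x > f α₀ x ≥ x`.
-/

open Set Filter Topology

lemma eventually_le_of_deriv_eq_one_of_deriv_deriv_pos {φ : ℝ → ℝ} {x₀ : ℝ}
    (hfix : φ x₀ = x₀) (hd1 : deriv φ x₀ = 1) (hd2 : 0 < deriv (deriv φ) x₀) :
    ∀ᶠ x in 𝓝 x₀, x ≤ φ x := by
  have hd1ne : deriv φ x₀ ≠ 0 := by rw [hd1]; exact one_ne_zero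
  -- `hd2` makes `deriv φ` continuous at `x₀`, hence nonzero nearby, and a nonzero `deriv` is a
  -- genuine derivative.
  have hdiff : ∀ᶠ x in 𝓝 x₀, DifferentiableAt ℝ φ x :=
    ((differentiableAt_of_deriv_ne_zero hd2.ne').continuousAt.eventually_ne hd1ne).mono
      fun x hx => differentiableAt_of_deriv_ne_zero hx
  have hderiv : deriv (fun x => φ x - x) =ᶠ[𝓝 x₀] fun x => deriv φ x - 1 :=
    hdiff.mono fun x hx => (hx.hasDerivAt.sub (hasDerivAt_id x)).deriv
  have hmin : IsLocalMin (fun x => φ x - x) x₀ := by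
    refine isLocalMin_of_deriv_deriv_pos ?_ ?_ ?_
    · rwa [hderiv.deriv_eq, deriv_sub_const]
    · rw [hderiv.eq_of_nhds, hd1, sub_self]
    · exact (differentiableAt_of_deriv_ne_zero hd1ne).continuousAt.sub continuousAt_id
  filter_upwards [hmin] with x hx
  simpa [hfix] using hx

section PartialDeriv

variable {E F : Type*} [NormedAddCommGroup E] [NormedSpace ℝ E]
  [NormedAddCommGroup F] [NormedSpace ℝ F]

lemma continuous_deriv_left_of_contDiff {f : ℝ → E → F}
    (hf : ContDiff ℝ 1 (Function.uncurry f)) :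
    Continuous fun p : ℝ × E => deriv (fun a => f a p.2) p.1 := by
  have hpartial : ∀ p : ℝ × E,
      HasDerivAt (fun a => f a p.2) (fderiv ℝ (Function.uncurry f) p (1, 0)) p.1 := by
    rintro ⟨a, x⟩
    have hline : HasDerivAt (fun a : ℝ => (a, x)) ((1 : ℝ), (0 : E)) a :=
      (hasDerivAt_id' a).prodMk (hasDerivAt_const a x)
    exact (hf.differentiable one_ne_zero (a, x)).hasFDerivAt.comp_hasDerivAt a hline
  simp_rw [fun p => (hpartial p).deriv]
  exact (hf.continuous_fderiv one_ne_zero).clm_apply continuous_const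

lemma exists_forall_lt_of_deriv_left_pos {f : ℝ → E → ℝ} {α₀ : ℝ} {x₀ : E}
    (hf : ContDiff ℝ 1 (Function.uncurry f)) (hpos : 0 < deriv (fun α => f α x₀) α₀) :
    ∃ ᾱ > α₀, ∀ᶠ x in 𝓝 x₀, ∀ α ∈ Ioc α₀ ᾱ, f α₀ x < f α x := by
  have hnear : ∀ᶠ p in 𝓝 (α₀, x₀), 0 < deriv (fun a => f a p.2) p.1 :=
    (continuous_deriv_left_of_contDiff hf).continuousAt.eventually (eventually_gt_nhds hpos)
  rw [nhds_prod_eq, eventually_prod_iff] at hnear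
  obtain ⟨pα, hpα, px, hpx, hprod⟩ := hnear
  obtain ⟨ᾱ, hᾱ, hIcc⟩ := mem_nhdsGE_iff_exists_Icc_subset.mp (nhdsWithin_le_nhds hpα)
  refine ⟨ᾱ, hᾱ, hpx.mono fun x hx α hα => ?_⟩
  have hcont : Continuous fun a => f a x :=
    hf.continuous.comp (continuous_id.prodMk continuous_const)
  refine strictMonoOn_of_deriv_pos (convex_Icc α₀ ᾱ) hcont.continuousOn (fun a ha => ?_)
    (left_mem_Icc.mpr (le_of_lt hᾱ)) (Ioc_subset_Icc_self hα) hα.1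
  rw [interior_Icc] at ha
  exact hprod (hIcc (Ioo_subset_Icc_self ha)) hx

end PartialDeriv

theorem saddle_node_no_fixed_points_general
    (f : ℝ → ℝ → ℝ) (α₀ x₀ : ℝ)
    (hjoint : ContDiff ℝ 1 (Function.uncurry f))
    (hfix : f α₀ x₀ = x₀)
    (hd1 : deriv (f α₀) x₀ = 1)
    (hd2 : 0 < deriv (deriv (f α₀)) x₀)
    (hdα : 0 < deriv (fun α => f α x₀) α₀) :
    ∃ ᾱ > α₀, ∃ V : Set ℝ, IsOpen V ∧ x₀ ∈ V ∧
      ∀ α ∈ Set.Ioo α₀ ᾱ, ∀ x ∈ V, f α x ≠ x := by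
  obtain ⟨ᾱ, hᾱ, hlift⟩ := exists_forall_lt_of_deriv_left_pos hjoint hdα
  have habove := eventually_le_of_deriv_eq_one_of_deriv_deriv_pos hfix hd1 hd2
  obtain ⟨V, hV, hVopen, hx₀V⟩ := eventually_nhds_iff.mp (hlift.and habove)
  refine ⟨ᾱ, hᾱ, V, hVopen, hx₀V, fun α hα x hx => ?_⟩
  exact ((hV x hx).2.trans_lt ((hV x hx).1 α (Ioo_subset_Ioc_self hα))).ne'

theorem saddle_node_no_fixed_points
    (f : ℝ → ℝ → ℝ) (α₀ x₀ : ℝ)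
    (hjoint : ContDiff ℝ 1 (Function.uncurry f))
    (hC2 : ContDiff ℝ 2 (f α₀))
    (hfix : f α₀ x₀ = x₀)
    (hd1 : deriv (f α₀) x₀ = 1)
    (hd2 : 0 < deriv (deriv (f α₀)) x₀)
    (hdα : 0 < deriv (fun α => f α x₀) α₀) :
    ∃ ᾱ > α₀, ∃ V : Set ℝ, IsOpen V ∧ x₀ ∈ V ∧
      ∀ α ∈ Set.Ioo α₀ ᾱ, ∀ x ∈ V, f α x ≠ x :=
  saddle_node_no_fixed_points_general f α₀ x₀ hjoint hfix hd1 hd2 hdα
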